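/- arXiv:1501.03275 — 2 statements merged into one kernel-verified Lean document; each statement's English description precedes it below -/
import Mathlib

section
/- Suppose f + 1 = λm and let χ be a multiplicative character of order m on F_q. Then M_{q,m} is a (q, f + 1, λ)-difference set in F_q if and only if Σ_{t=1}^{m−1} J_q(χ^s, χ^t) = 1 − m − m·χ^s(−1) for every s = 1, ..., m − 1. -/
/-- `D` is a `(q, k, l)`-difference set in the additive group `F` (with `q = |F|`). -/
def IsDiffSet {F : Type*} [AddGroup F] (D : Set F) (k l : ℕ) : Prop :=
  D.ncard = k ∧
    ∀ a : F, a ≠ 0 → {x : F × F | x.1 ∈ D ∧ x.2 ∈ D ∧ x.1 - x.2 = a}.ncard = l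

/-- The set of nonzero `m`-th powers in `F`. -/
def Hset (F : Type*) [Field F] (m : ℕ) : Set F :=
  {x : F | x ≠ 0 ∧ ∃ y : F, y ^ m = x}

/-- The set of `m`-th powers in `F`, including `0`. -/
def Mset (F : Type*) [Field F] (m : ℕ) : Set F :=
  Hset F m ∪ {0}

/-- The Jacobi sum `J_q(χ, ψ) = ∑ α ∈ F_q, χ(α) ψ(1 - α)`. -/
noncomputable def Jsum {F : Type*} [Field F] [Fintype F] (χ ψ : MulChar F ℂ) : ℂ :=
  ∑ α : F, χ α * ψ (1 - α)

/-!
Let `H = ⟨χ⟩`, a group of `m` characters. For `x ≠ 0`, `∑_{ψ ∈ H} ψ x` is `m` when `x` lies in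
the common kernel of `H` (the nonzero `m`-th powers) and `0` otherwise, so with `K = M_{q,m}`
we have `m · 1_K = m · δ₀ + ∑_{ψ ∈ H} ψ`. Substituting this into
`N(a) = #{(x, y) ∈ K² | x - y = a}` leaves the correlations
`∑_y ψ(y + a) φ(y) = (ψφ)(a) J((ψφ)⁻¹, φ)`, and collecting terms by `ρ = ψφ` gives
`m² N(a) = ∑_{ρ ∈ H} c(ρ⁻¹) ρ(a)` with `c(σ) = m(1 + σ(-1)) + ∑_{φ ∈ H} J(σ, φ)`.
Characters are linearly independent, so `N` is constant on `F^*` exactly when `c(σ) = 0` for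
all `σ ≠ 1`; the trivial coefficient `c(1) = q - 1 + m = m²λ` takes care of itself. For
`σ = χ^s`, `c(σ) = 0` is the stated identity, because `J(σ, 1) = -1`.
-/

open Finset Subgroup

theorem MulChar.linearIndependent_apply_units {M R : Type*} [CommMonoid M] [CommRing R]
    [IsDomain R] : LinearIndependent R fun (χ : MulChar M R) (u : Mˣ) => χ u := by
  refine (linearIndependent_monoidHom Mˣ R).comp
    (fun χ : MulChar M R => (Units.coeHom R).comp χ.toUnitHom) fun χ ψ h => ?_
  ext u
  exact DFunLike.congr_fun h u

open scoped Classical in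
theorem MulChar.sum_apply_eq_ite {F R : Type*} [Field F] [Fintype F] [CommRing R] [IsDomain R]
    (ψ : MulChar F R) : ∑ x, ψ x = if ψ = 1 then (Fintype.card F : R) - 1 else 0 := by
  split_ifs with h
  · rw [h, MulChar.sum_one_eq_card_units, Fintype.card_units, Nat.cast_pred Fintype.card_pos]
  · exact MulChar.sum_eq_zero_of_ne_one h

theorem MulChar.orderOf_apply_eq_orderOf {M R : Type*} [CommMonoid M] [CommMonoidWithZero R]
    {g : Mˣ} (hg : ∀ x, x ∈ zpowers g) (χ : MulChar M R) : orderOf (χ g) = orderOf χ :=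
  orderOf_eq_orderOf_iff.2 fun n => by
    rw [MulChar.eq_iff hg (χ ^ n) 1, MulChar.pow_apply_coe, MulChar.one_apply_coe]

theorem MulChar.apply_eq_one_iff_exists_pow_eq {F R : Type*} [Field F] [Finite F]
    [CommMonoidWithZero R] (χ : MulChar F R) {x : F} (hx : x ≠ 0) :
    χ x = 1 ↔ ∃ y, y ^ orderOf χ = x := by
  refine ⟨fun h => ?_, ?_⟩
  · obtain ⟨g, hg⟩ := IsCyclic.exists_generator (α := Fˣ)
    lift x to Fˣ using hx.isUnit
    obtain ⟨k, rfl⟩ := mem_powers_iff_mem_zpowers.2 (hg x)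
    rw [Units.val_pow_eq_pow_val, map_pow, ← orderOf_dvd_iff_pow_eq_one,
      MulChar.orderOf_apply_eq_orderOf hg] at h
    obtain ⟨j, rfl⟩ := h
    exact ⟨(g : F) ^ j, by rw [← pow_mul, mul_comm, Units.val_pow_eq_pow_val]⟩
  · rintro ⟨y, rfl⟩
    have hy : y ≠ 0 := ne_zero_pow (orderOf_pos χ).ne' hx
    rw [map_pow, ← MulChar.pow_apply' χ (orderOf_pos χ).ne', pow_orderOf_eq_one,
      MulChar.one_apply hy.isUnit]

theorem MulChar.forall_mem_zpowers_apply_eq_one_iff {F R : Type*} [Field F] [Finite F]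
    [CommRing R] [IsDomain R] (χ : MulChar F R) (u : Fˣ) :
    (∀ ψ ∈ zpowers χ, ψ u = 1) ↔ χ u = 1 := by
  refine ⟨fun h => h χ (mem_zpowers χ), fun h ψ hψ => ?_⟩
  obtain ⟨k, rfl⟩ := (isOfFinOrder_of_finite χ).mem_powers_iff_mem_zpowers.2 hψ
  rw [MulChar.pow_apply_coe, h, one_pow]

theorem sum_zpowers_eq_sum_range {G M : Type*} [Group G] [AddCommMonoid M] {x : G}
    (hx : IsOfFinOrder x) [Fintype (zpowers x)] (g : G → M) :
    ∑ y : zpowers x, g y = ∑ t ∈ range (orderOf x), g (x ^ t) :=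
  (Fintype.sum_equiv (finEquivZPowers hx) _ _ fun _ => rfl).symm.trans
    (Fin.sum_univ_eq_sum_range (fun t => g (x ^ t)) _)

theorem forall_zpowers_ne_one_iff {G : Type*} [Group G] {x : G} (hx : IsOfFinOrder x)
    {P : G → Prop} :
    (∀ y : zpowers x, y ≠ 1 → P y) ↔ ∀ s, 1 ≤ s → s ≤ orderOf x - 1 → P (x ^ s) := by
  refine ⟨fun h s hs₁ hs₂ => ?_, fun h y hy => ?_⟩
  · refine h ⟨x ^ s, pow_mem (mem_zpowers x) s⟩ fun h1 => ?_
    exact pow_ne_one_of_lt_orderOf (by omega) (by omega) (congrArg Subtype.val h1)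
  · obtain ⟨s, rfl⟩ := (finEquivZPowers hx).surjective y
    have hs : (s : ℕ) ≠ 0 := fun h0 => hy (by ext; simp [finEquivZPowers_apply, h0])
    simpa [finEquivZPowers_apply] using h s (by omega) (by omega)

open scoped Classical in
theorem natCast_ncard_eq_sum_ite {α R : Type*} [Fintype α] [AddCommMonoidWithOne R]
    (s : Set α) : (s.ncard : R) = ∑ x, if x ∈ s then 1 else 0 := by
  rw [Set.ncard_eq_toFinset_card', ← natCast_card_filter]
  congr
  ext
  simp

noncomputable def diffCount {G : Type*} [AddGroup G] (K : Set G) (a : G) : ℕ :=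
  {x : G × G | x.1 ∈ K ∧ x.2 ∈ K ∧ x.1 - x.2 = a}.ncard

open scoped Classical in
theorem natCast_diffCount_eq_sum {G R : Type*} [AddCommGroup G] [Fintype G]
    [NonAssocSemiring R] (K : Set G) (a : G) :
    (diffCount K a : R) = ∑ y, (if y + a ∈ K then 1 else 0) * (if y ∈ K then 1 else 0) := by
  have hK : {x : G × G | x.1 ∈ K ∧ x.2 ∈ K ∧ x.1 - x.2 = a}
      = (fun y => (y + a, y)) '' {y | y + a ∈ K ∧ y ∈ K} := by
    ext ⟨x, y⟩
    simp only [Set.mem_ofPred_eq, Set.mem_image, Prod.mk.injEq]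
    constructor
    · rintro ⟨hx, hy, rfl⟩
      exact ⟨y, ⟨by simpa using hx, hy⟩, by abel, rfl⟩
    · rintro ⟨z, ⟨hz, hz'⟩, rfl, rfl⟩
      exact ⟨hz, hz', by abel⟩
  rw [diffCount, hK, Set.ncard_image_of_injective _ fun y z h => congrArg Prod.snd h,
    natCast_ncard_eq_sum_ite]
  refine sum_congr rfl fun y _ => ?_
  by_cases h₁ : y + a ∈ K <;> by_cases h₂ : y ∈ K <;> simp [h₁, h₂]

section JacobiSum

variable {F R : Type*} [Field F] [Fintype F] [CommRing R]

theorem jacobiSum_eq_apply_neg_one_mul (χ ψ : MulChar F R) :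
    jacobiSum χ ψ = χ (-1) * jacobiSum (χ * ψ)⁻¹ χ := by
  rw [jacobiSum, jacobiSum, mul_sum]
  -- `a ↦ (1 - a)⁻¹` permutes `F`; it sends `1` to `0`, where both summands vanish.
  refine Fintype.sum_equiv ((Equiv.subLeft 1).trans (Equiv.inv F)) _ _ fun a => ?_
  simp only [Equiv.trans_apply, Equiv.subLeft_apply, Equiv.inv_apply]
  rcases eq_or_ne a 1 with rfl | ha
  · simp [MulChar.map_nonunit _ (not_isUnit_zero (M₀ := F))]
  have hu : 1 - a ≠ 0 := sub_ne_zero.2 ha.symm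
  have h1 : 1 - (1 - a)⁻¹ = -1 * a * (1 - a)⁻¹ := by field_simp; ring
  have hχu : χ (1 - a) * χ (1 - a)⁻¹ = 1 := by rw [← map_mul, mul_inv_cancel₀ hu, map_one]
  have hχ : χ (-1) * χ (-1) = 1 := by rw [← map_mul, neg_mul_neg, one_mul, map_one]
  rw [MulChar.inv_apply', inv_inv, h1, map_mul, map_mul, MulChar.mul_apply]
  linear_combination (-(χ a * ψ (1 - a))) * (χ (-1) * χ (-1) * hχu + hχ)

theorem sum_apply_add_mul_apply {a : F} (ha : a ≠ 0) (χ ψ : MulChar F R) :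
    ∑ y, χ (y + a) * ψ y = (χ * ψ) a * jacobiSum (χ * ψ)⁻¹ ψ := by
  have hψ : ψ (-1) * ψ (-1) = 1 := by rw [← map_mul, neg_mul_neg, one_mul, map_one]
  calc ∑ y, χ (y + a) * ψ y = ∑ y, χ (-a * y + a) * ψ (-a * y) :=
        (Fintype.sum_equiv (Equiv.mulLeft₀ (-a) (neg_ne_zero.2 ha)) _ _ fun _ => rfl).symm
    _ = ∑ y, χ a * ψ (-1) * ψ a * (ψ y * χ (1 - y)) := by
        refine sum_congr rfl fun y _ => ?_
        rw [show -a * y + a = a * (1 - y) by ring, show -a * y = -1 * a * y by ring]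
        simp only [map_mul]
        ring
    _ = (χ * ψ) a * jacobiSum (χ * ψ)⁻¹ ψ := by
        rw [← mul_sum, ← jacobiSum, jacobiSum_eq_apply_neg_one_mul, mul_comm ψ χ,
          MulChar.mul_apply]
        linear_combination χ a * ψ a * jacobiSum (χ * ψ)⁻¹ ψ * hψ

end JacobiSum

section Subgroup

open scoped Classical

variable {F R : Type*} [Field F] [CommRing R] (H : Subgroup (MulChar F R))

def kerWithZero : Set F := {x | x = 0 ∨ ∀ ψ ∈ H, ψ x = 1}

variable [Fintype H]

section IsDomain

variable [IsDomain R]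

theorem sum_subgroup_mul_apply_eq_zero_iff (c : H → R) :
    (∀ a : F, a ≠ 0 → ∑ ρ : H, c ρ * (ρ : MulChar F R) a = 0) ↔ ∀ ρ, c ρ = 0 := by
  have hli := (MulChar.linearIndependent_apply_units (M := F) (R := R)).comp
    (fun ρ : H => (ρ : MulChar F R)) Subtype.val_injective
  refine ⟨fun h => Fintype.linearIndependent_iff.1 hli c ?_, fun h a _ => ?_⟩
  · ext u
    simpa using h u u.ne_zero
  · simp [h]

theorem sum_subgroup_apply {x : F} (hx : x ≠ 0) :
    ∑ ψ : H, (ψ : MulChar F R) x = if x ∈ kerWithZero H then (Fintype.card H : R) else 0 := by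
  by_cases h : ∀ ψ ∈ H, ψ x = 1
  · rw [if_pos (show x ∈ kerWithZero H from Or.inr h), sum_congr rfl fun ψ _ => h _ ψ.prop,
      sum_const, card_univ, nsmul_one]
  · obtain ⟨ψ₀, hψ₀, hne⟩ := not_forall₂.1 h
    rw [if_neg (by simp [kerWithZero, hx, h])]
    refine eq_zero_of_mul_eq_self_left hne ?_
    rw [mul_sum]
    exact Fintype.sum_equiv (Equiv.mulLeft ⟨ψ₀, hψ₀⟩) _ _ fun ψ => (MulChar.mul_apply _ _ x).symm

theorem card_mul_indicator_kerWithZero (x : F) :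
    (Fintype.card H : R) * (if x ∈ kerWithZero H then 1 else 0)
      = (if x = 0 then (Fintype.card H : R) else 0) + ∑ ψ : H, (ψ : MulChar F R) x := by
  rcases eq_or_ne x 0 with rfl | hx
  · simp [kerWithZero, MulChar.map_nonunit _ (not_isUnit_zero (M₀ := F))]
  · rw [sum_subgroup_apply H hx, if_neg hx, zero_add, mul_ite, mul_one, mul_zero]

end IsDomain

variable [Fintype F]

theorem sum_sum_apply_add_mul_sum_apply {a : F} (ha : a ≠ 0) :
    ∑ y, (∑ ψ : H, (ψ : MulChar F R) (y + a)) * ∑ φ : H, (φ : MulChar F R) y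
      = ∑ ρ : H, (ρ : MulChar F R) a * ∑ φ : H, jacobiSum (ρ : MulChar F R)⁻¹ φ := by
  calc _ = ∑ ψ : H, ∑ φ : H, ∑ y, (ψ : MulChar F R) (y + a) * (φ : MulChar F R) y := by
        simp only [sum_mul_sum]
        rw [sum_comm]
        exact sum_congr rfl fun _ _ => sum_comm
    _ = ∑ φ : H, ∑ ψ : H, ((ψ : MulChar F R) * (φ : MulChar F R)) a
          * jacobiSum ((ψ : MulChar F R) * (φ : MulChar F R))⁻¹ φ := by
        rw [sum_comm]
        simp only [sum_apply_add_mul_apply ha]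
    _ = ∑ φ : H, ∑ ρ : H, (ρ : MulChar F R) a * jacobiSum (ρ : MulChar F R)⁻¹ φ :=
        sum_congr rfl fun φ _ => Fintype.sum_equiv (Equiv.mulRight φ) _
          (fun ρ : H => (ρ : MulChar F R) a * jacobiSum (ρ : MulChar F R)⁻¹ φ) fun _ => rfl
    _ = _ := by
        rw [sum_comm]
        simp only [mul_sum]

def jacobiCoeff (σ : MulChar F R) : R :=
  Fintype.card H * (1 + σ (-1)) + ∑ φ : H, jacobiSum σ φ

variable [IsDomain R]

theorem card_sq_mul_diffCount {a : F} (ha : a ≠ 0) :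
    (Fintype.card H : R) ^ 2 * diffCount (kerWithZero H) a
      = ∑ ρ : H, jacobiCoeff H (ρ : MulChar F R)⁻¹ * (ρ : MulChar F R) a := by
  set n := (Fintype.card H : R)
  set S := fun x => ∑ ψ : H, (ψ : MulChar F R) x
  have hS : ∀ x, S (-x) = ∑ ρ : H, (ρ : MulChar F R)⁻¹ (-1) * (ρ : MulChar F R) x := by
    intro x
    refine sum_congr rfl fun ρ _ => ?_
    rw [MulChar.inv_apply', inv_neg_one, neg_eq_neg_one_mul, map_mul]
  have hS0 : S 0 = 0 := sum_eq_zero fun ψ _ => MulChar.map_nonunit _ not_isUnit_zero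
  have hy : ∀ y, ((if y + a = 0 then n else 0) + S (y + a)) * ((if y = 0 then n else 0) + S y)
      = (if y = -a then n * S (-a) else 0) + (if y = 0 then n * S a else 0)
        + S (y + a) * S y := by
    intro y
    rcases eq_or_ne y (-a) with rfl | h1
    · simp [ha, hS0]
    rcases eq_or_ne y 0 with rfl | h2
    · simp [ha, hS0, mul_comm]
    simp [h1, h2, add_eq_zero_iff_eq_neg]
  calc _ = ∑ y, ((if y + a = 0 then n else 0) + S (y + a))
          * ((if y = 0 then n else 0) + S y) := by
        rw [natCast_diffCount_eq_sum, mul_sum]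
        refine sum_congr rfl fun y _ => ?_
        rw [← card_mul_indicator_kerWithZero, ← card_mul_indicator_kerWithZero]
        ring
    _ = n * S (-a) + n * S a + ∑ y, S (y + a) * S y := by
        simp only [hy, sum_add_distrib, sum_ite_eq', mem_univ, if_true]
    _ = _ := by
        rw [sum_sum_apply_add_mul_sum_apply H ha, hS, mul_sum, mul_sum, ← sum_add_distrib,
          ← sum_add_distrib]
        refine sum_congr rfl fun ρ _ => ?_
        rw [jacobiCoeff]
        ring

theorem jacobiCoeff_one : jacobiCoeff H 1 = Fintype.card F - 1 + Fintype.card H := by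
  have hJ : ∀ φ : H, jacobiSum (1 : MulChar F R) φ
      = (if φ = 1 then (Fintype.card F : R) - 1 else 0) - 1 := by
    intro φ
    split_ifs with h
    · rw [h, OneMemClass.coe_one, jacobiSum_one_one]
      ring
    · rw [jacobiSum_one_nontrivial (by simpa using h)]
      ring
  rw [jacobiCoeff, sum_congr rfl fun φ _ => hJ φ, sum_sub_distrib, sum_ite_eq',
    if_pos (mem_univ _), MulChar.one_apply isUnit_one.neg, sum_const, card_univ, nsmul_one]
  ring

theorem card_mul_ncard_kerWithZero :
    (Fintype.card H : R) * (kerWithZero H).ncard = Fintype.card F - 1 + Fintype.card H := by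
  rw [natCast_ncard_eq_sum_ite, mul_sum]
  simp only [card_mul_indicator_kerWithZero, sum_add_distrib, sum_ite_eq', mem_univ, if_true]
  rw [sum_comm]
  simp only [MulChar.sum_apply_eq_ite, OneMemClass.coe_eq_one, sum_ite_eq', mem_univ, if_true]
  ring

theorem card_sq_mul_diffCount_sub {a : F} (ha : a ≠ 0) :
    (Fintype.card H : R) ^ 2 * diffCount (kerWithZero H) a
        - (Fintype.card F - 1 + Fintype.card H)
      = ∑ ρ : H, (if ρ = 1 then 0 else jacobiCoeff H (ρ : MulChar F R)⁻¹)
          * (ρ : MulChar F R) a := by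
  have h : ∀ ρ : H, jacobiCoeff H (ρ : MulChar F R)⁻¹ * (ρ : MulChar F R) a
      = (if ρ = 1 then 0 else jacobiCoeff H (ρ : MulChar F R)⁻¹) * (ρ : MulChar F R) a
        + if ρ = 1 then jacobiCoeff H 1 else 0 := by
    intro ρ
    split_ifs with hρ
    · simp [hρ, MulChar.one_apply (Ne.isUnit ha)]
    · ring
  rw [card_sq_mul_diffCount H ha, sum_congr rfl fun ρ _ => h ρ, sum_add_distrib, sum_ite_eq',
    if_pos (mem_univ _), jacobiCoeff_one, add_sub_cancel_right]

theorem isDiffSet_kerWithZero_iff [CharZero R] {k l : ℕ} (hk : (kerWithZero H).ncard = k)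
    (hkl : k = l * Fintype.card H) :
    IsDiffSet (kerWithZero H) k l ↔ ∀ σ : H, σ ≠ 1 → jacobiCoeff H σ = 0 := by
  have hn : (Fintype.card H : R) ^ 2 ≠ 0 :=
    pow_ne_zero 2 (Nat.cast_ne_zero.2 Fintype.card_ne_zero)
  have hl : (Fintype.card H : R) ^ 2 * l = Fintype.card F - 1 + Fintype.card H := by
    rw [← card_mul_ncard_kerWithZero, hk, hkl]
    push_cast
    ring
  change _ ∧ (∀ a, a ≠ 0 → diffCount (kerWithZero H) a = l) ↔ _
  rw [and_iff_right hk]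
  calc _ ↔ ∀ a : F, a ≠ 0 → ∑ ρ : H, (if ρ = 1 then 0 else jacobiCoeff H (ρ : MulChar F R)⁻¹)
          * (ρ : MulChar F R) a = 0 := by
        refine forall₂_congr fun a ha => ?_
        rw [← card_sq_mul_diffCount_sub H ha, ← hl, sub_eq_zero, mul_right_inj' hn,
          Nat.cast_inj]
    _ ↔ ∀ ρ : H, ρ ≠ 1 → jacobiCoeff H (ρ : MulChar F R)⁻¹ = 0 := by
        rw [sum_subgroup_mul_apply_eq_zero_iff]
        refine forall_congr' fun ρ => ?_
        by_cases hρ : ρ = 1 <;> simp [hρ]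
    _ ↔ _ := ⟨fun h σ hσ => by simpa using h σ⁻¹ (inv_ne_one.2 hσ),
        fun h ρ hρ => h ρ⁻¹ (inv_ne_one.2 hρ)⟩

end Subgroup

theorem Mset_eq_kerWithZero {F R : Type*} [Field F] [Finite F] [CommRing R] [IsDomain R]
    (χ : MulChar F R) : Mset F (orderOf χ) = kerWithZero (zpowers χ) := by
  ext x
  rcases eq_or_ne x 0 with rfl | hx
  · simp [Mset, kerWithZero]
  lift x to Fˣ using hx.isUnit
  simp only [Mset, Hset, kerWithZero, Set.mem_union, Set.mem_ofPred_eq, Set.mem_singleton_iff,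
    hx, false_or, or_false, true_and, ne_eq, not_false_eq_true]
  rw [MulChar.forall_mem_zpowers_apply_eq_one_iff, MulChar.apply_eq_one_iff_exists_pow_eq χ hx]

theorem jacobiCoeff_zpowers {F R : Type*} [Field F] [Fintype F] [CommRing R] [IsDomain R]
    (χ : MulChar F R) [Fintype (zpowers χ)] {σ : MulChar F R} (hσ : σ ≠ 1) :
    jacobiCoeff (zpowers χ) σ
      = orderOf χ * (1 + σ (-1)) - 1 + ∑ t ∈ Icc 1 (orderOf χ - 1), jacobiSum σ (χ ^ t) := by
  have hIcc : Icc 1 (orderOf χ - 1) = Ico 1 (orderOf χ) := by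
    ext
    simp only [mem_Icc, mem_Ico]
    omega
  rw [jacobiCoeff, Fintype.card_eq_nat_card, Nat.card_zpowers,
    sum_zpowers_eq_sum_range (isOfFinOrder_of_finite χ) (jacobiSum σ), range_eq_Ico,
    sum_eq_sum_Ico_succ_bot (orderOf_pos χ), pow_zero, jacobiSum_comm,
    jacobiSum_one_nontrivial hσ, hIcc]
  ring

theorem stmt4_general (m f l : ℕ)
    (F : Type*) [Field F] [Fintype F]
    (hcard : Fintype.card F = m * f + 1)
    (hlf : f + 1 = l * m)
    (χ : MulChar F ℂ) (hχ : orderOf χ = m) :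
    IsDiffSet (Mset F m) (f + 1) l ↔
      ∀ s : ℕ, 1 ≤ s → s ≤ m - 1 →
        ∑ t ∈ Finset.Icc 1 (m - 1), Jsum (χ ^ s) (χ ^ t)
          = 1 - (m : ℂ) - (m : ℂ) * (χ ^ s) (-1) := by
  subst hχ
  let := Fintype.ofFinite (zpowers χ)
  have hH : Fintype.card (zpowers χ) = orderOf χ := by
    rw [Fintype.card_eq_nat_card, Nat.card_zpowers]
  have hk : (kerWithZero (zpowers χ)).ncard = f + 1 := by
    have h := card_mul_ncard_kerWithZero (R := ℂ) (zpowers χ)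
    rw [hH, hcard] at h
    push_cast at h
    refine Nat.cast_injective (R := ℂ) (mul_left_cancel₀ ?_ (h.trans ?_))
    · exact Nat.cast_ne_zero.2 (orderOf_pos χ).ne'
    · push_cast
      ring
  rw [Mset_eq_kerWithZero, isDiffSet_kerWithZero_iff _ hk (by rw [hH, hlf])]
  refine (forall_zpowers_ne_one_iff (P := fun σ => jacobiCoeff (zpowers χ) σ = 0)
    (isOfFinOrder_of_finite χ)).trans (forall₃_congr fun s hs₁ hs₂ => ?_)
  rw [jacobiCoeff_zpowers χ (pow_ne_one_of_lt_orderOf (by omega) (by omega))]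
  change _ ↔ ∑ t ∈ Icc 1 (orderOf χ - 1), jacobiSum (χ ^ s) (χ ^ t) = _
  constructor <;> intro h <;> linear_combination h

theorem stmt4 (p m f l : ℕ) (hp : p.Prime) (hm : 0 < m) (hf : 0 < f)
    (F : Type*) [Field F] [Fintype F]
    (hq : ∃ n : ℕ, 0 < n ∧ Fintype.card F = p ^ n)
    (hcard : Fintype.card F = m * f + 1)
    (hlf : f + 1 = l * m)
    (χ : MulChar F ℂ) (hχ : orderOf χ = m) :
    IsDiffSet (Mset F m) (f + 1) l ↔
      ∀ s : ℕ, 1 ≤ s → s ≤ m - 1 →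
        ∑ t ∈ Finset.Icc 1 (m - 1), Jsum (χ ^ s) (χ ^ t)
          = 1 - (m : ℂ) - (m : ℂ) * (χ ^ s) (-1) :=
  stmt4_general m f l F hcard hlf χ hχ
end

section
/- If m is odd, then H_{q,m} is never a nontrivial difference set in F_q. -/
/-- `D` is a nontrivial difference set: a `(q, k, l)`-difference set of order `k - l > 1`. -/
def IsNontrivialDiffSet {F : Type*} [AddGroup F] (D : Set F) : Prop :=
  ∃ k l : ℕ, IsDiffSet D k l ∧ 1 < k - l

/-!
Since `m` is odd, `-1` is an `m`-th power, so `H = H_{q,m}` is symmetric. In odd characteristic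
the involution `(x, y) ↦ (-y, -x)` of the pairs with difference `a` fixes exactly `(a/2, -a/2)` when
`a/2 ∈ H`, and nothing otherwise; so `λ ≡ [a/2 ∈ H] (mod 2)` for every `a ≠ 0`, which forces
`H = F_q^*`, a difference set of order `1`.

In characteristic `2` take a nontrivial `±1`-valued additive character `ψ` and put
`t c = ∑_{x ∈ H} ψ (c x)`. Then `t c ^ 2 = k - λ`, so `t c = ± t 1`, for `c ≠ 0`; and `∑_c t c = 0`,
so `t 1 ∣ t 0 = k`.
Writing `q - 1 = m' k`, counting pairs gives `k = 1 + λ m'`, so `m' (t 1) ^ 2 = (m' - 1) k + 1`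
and `t 1 ∣ 1`, i.e. `k - λ = 1`.
-/

open Finset

theorem Finset.card_modEq_card_filter_eq_of_involution {α : Type*} [DecidableEq α]
    (s : Finset α) (g : α → α) (hg : ∀ x ∈ s, g x ∈ s) (hgg : ∀ x ∈ s, g (g x) = x) :
    #s ≡ #{x ∈ s | g x = x} [MOD 2] := by
  have hmoved : (#{x ∈ s | ¬g x = x} : ZMod 2) = 0 := by
    rw [card_eq_sum_ones, Nat.cast_sum]
    refine sum_involution (fun x _ => g x) (fun x _ => by decide)
      (fun x hx _ => (mem_filter.1 hx).2) (fun x hx => ?_) (fun x hx => hgg x (mem_filter.1 hx).1)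
    obtain ⟨hxs, hx⟩ := mem_filter.1 hx
    exact mem_filter.2 ⟨hg x hxs, by rw [hgg x hxs]; exact Ne.symm hx⟩
  rw [← ZMod.natCast_eq_natCast_iff, ← card_filter_add_card_filter_not (p := fun x => g x = x),
    Nat.cast_add, hmoved, add_zero]

theorem AddChar.map_neg_of_int {G : Type*} [AddGroup G] (ψ : AddChar G ℤ) (a : G) :
    ψ (-a) = ψ a := by
  have h : ψ a * ψ (-a) = 1 := by
    rw [← AddChar.map_add_eq_mul, add_neg_cancel, AddChar.map_zero_eq_one]
  rcases Int.eq_one_or_neg_one_of_mul_eq_one' h with ⟨h1, h2⟩ | ⟨h1, h2⟩ <;> rw [h1, h2]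

theorem Int.sub_eq_one_of_sq_eq_sub_of_dvd {t k l m : ℤ} (ht : t ^ 2 = k - l) (htk : t ∣ k)
    (hk : k = 1 + l * m) : k - l = 1 := by
  have hunit : t ∣ 1 := by
    have h1 : (1 : ℤ) = m * t ^ 2 - (m - 1) * k := by rw [ht, hk]; ring
    rw [h1]
    exact dvd_sub (Dvd.dvd.mul_left (dvd_pow_self t two_ne_zero) _) (htk.mul_left _)
  rcases Int.isUnit_iff.1 (isUnit_of_dvd_one hunit) with rfl | rfl <;> simp [← ht]

section DiffPairs

variable {G : Type*} [AddCommGroup G] [DecidableEq G] {D : Finset G} {k l : ℕ}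

def diffPairs (D : Finset G) (a : G) : Finset (G × G) := {p ∈ D ×ˢ D | p.1 - p.2 = a}

theorem mem_diffPairs {a : G} {p : G × G} :
    p ∈ diffPairs D a ↔ p.1 ∈ D ∧ p.2 ∈ D ∧ p.1 - p.2 = a := by
  simp [diffPairs, and_assoc]

theorem card_diffPairs_zero (D : Finset G) : #(diffPairs D 0) = #D := by
  refine card_nbij' Prod.fst (fun x => (x, x)) (fun p hp => ?_) (fun x hx => ?_) (fun p hp => ?_)
    (fun x _ => rfl)
  · exact (mem_diffPairs.1 hp).1
  · simpa [mem_diffPairs] using hx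
  · obtain ⟨-, -, h⟩ := mem_diffPairs.1 hp
    exact Prod.ext rfl (sub_eq_zero.1 h)

theorem card_diffPairs_modEq_of_neg_mem (hneg : ∀ x ∈ D, -x ∈ D) (a : G) :
    #(diffPairs D a) ≡ #{x ∈ D | x + x = a} [MOD 2] := by
  have hfix : #{p ∈ diffPairs D a | (-p.2, -p.1) = p} = #{x ∈ D | x + x = a} := by
    refine card_nbij' Prod.fst (fun x => (x, -x)) (fun p hp => ?_) (fun x hx => ?_)
      (fun p hp => ?_) (fun x _ => rfl)
    · obtain ⟨hp, hfix⟩ := mem_filter.1 hp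
      obtain ⟨h1, -, h⟩ := mem_diffPairs.1 hp
      rw [Prod.ext_iff, neg_eq_iff_eq_neg] at hfix
      exact mem_filter.2 ⟨h1, by rw [← h, hfix.1, sub_neg_eq_add]⟩
    · obtain ⟨hx, h⟩ := mem_filter.1 hx
      exact mem_filter.2 ⟨mem_diffPairs.2 ⟨hx, hneg x hx, by rw [sub_neg_eq_add, h]⟩, by simp⟩
    · have hfix := (mem_filter.1 hp).2
      rw [Prod.ext_iff, neg_eq_iff_eq_neg] at hfix
      exact Prod.ext rfl hfix.1.symm
  refine hfix ▸ card_modEq_card_filter_eq_of_involution _ (fun p => (-p.2, -p.1))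
    (fun p hp => ?_) (fun p _ => by simp)
  obtain ⟨h1, h2, h⟩ := mem_diffPairs.1 hp
  exact mem_diffPairs.2 ⟨hneg _ h2, hneg _ h1, by rw [neg_sub_neg, h]⟩

theorem isDiffSet_coe_iff :
    IsDiffSet (D : Set G) k l ↔ #D = k ∧ ∀ a, a ≠ 0 → #(diffPairs D a) = l := by
  simp only [IsDiffSet, Set.ncard_coe_finset]
  refine and_congr_right fun _ => forall₂_congr fun a _ => ?_
  rw [← Set.ncard_coe_finset (diffPairs D a)]
  congr! 2
  ext p
  simp [mem_diffPairs]

variable [Fintype G]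

theorem IsDiffSet.card_mul_self (h : IsDiffSet (D : Set G) k l) :
    k * k = k + l * (Fintype.card G - 1) := by
  obtain ⟨rfl, hl⟩ := isDiffSet_coe_iff.1 h
  calc #D * #D = ∑ a, #(diffPairs D a) := by
        rw [← card_product]
        exact card_eq_sum_card_fiberwise fun _ _ => mem_coe.2 (mem_univ _)
    _ = #D + l * (Fintype.card G - 1) := by
        rw [← add_sum_erase _ _ (mem_univ 0), card_diffPairs_zero,
          sum_congr rfl fun a ha => hl a (ne_of_mem_erase ha), sum_const, card_erase_of_mem
          (mem_univ _), card_univ, smul_eq_mul, mul_comm]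

theorem IsDiffSet.card_sub_le_one_of_card_add_one (h : IsDiffSet (D : Set G) k l)
    (hk : k + 1 = Fintype.card G) : k - l ≤ 1 := by
  have hcount := h.card_mul_self
  rw [← hk, Nat.add_sub_cancel] at hcount
  rcases Nat.eq_zero_or_pos k with rfl | hk0
  · simp
  · have : k = 1 + l := Nat.eq_of_mul_eq_mul_right hk0 (by linarith)
    omega

theorem IsDiffSet.sq_sum_addChar (h : IsDiffSet (D : Set G) k l) {ψ : AddChar G ℤ}
    (hψ : ψ ≠ 1) : (∑ x ∈ D, ψ x) ^ 2 = k - l := by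
  obtain ⟨rfl, hl⟩ := isDiffSet_coe_iff.1 h
  have hsum : ∑ a ∈ univ.erase 0, ψ a = -1 := by
    have := AddChar.sum_eq_zero_of_ne_one hψ
    rw [← add_sum_erase _ _ (mem_univ 0), AddChar.map_zero_eq_one] at this
    linarith
  calc (∑ x ∈ D, ψ x) ^ 2 = ∑ p ∈ D ×ˢ D, ψ (p.1 - p.2) := by
        rw [sq, sum_mul_sum, sum_product]
        refine sum_congr rfl fun x _ => sum_congr rfl fun y _ => ?_
        rw [sub_eq_add_neg, AddChar.map_add_eq_mul, AddChar.map_neg_of_int]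
    _ = ∑ a, #(diffPairs D a) * ψ a := by
        rw [← sum_fiberwise' (D ×ˢ D) (fun p => p.1 - p.2) ψ]
        simp only [diffPairs, sum_const, nsmul_eq_mul]
    _ = #D - l := by
        rw [← add_sum_erase _ _ (mem_univ 0), card_diffPairs_zero, AddChar.map_zero_eq_one,
          sum_congr rfl fun a ha => by rw [hl a (ne_of_mem_erase ha)], ← mul_sum, hsum]
        ring

end DiffPairs

section FiniteField

variable {F : Type*} [Field F] [DecidableEq F] {D : Finset F} {k l : ℕ}

theorem card_diffPairs_two_mul_modEq (h2 : (2 : F) ≠ 0) (hneg : ∀ x ∈ D, -x ∈ D) (c : F) :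
    #(diffPairs D (2 * c)) ≡ if c ∈ D then 1 else 0 [MOD 2] := by
  have hhalf : {x ∈ D | x + x = 2 * c} = {x ∈ D | x = c} := by
    refine filter_congr fun x _ => ?_
    rw [← two_mul, mul_right_inj' h2]
  refine (card_diffPairs_modEq_of_neg_mem hneg _).trans ?_
  rw [hhalf, filter_eq']
  split_ifs <;> rfl

theorem IsDiffSet.mem_iff_mem_of_neg_mem (h : IsDiffSet (D : Set F) k l) (hF : ringChar F ≠ 2)
    (hneg : ∀ x ∈ D, -x ∈ D) {c d : F} (hc : c ≠ 0) (hd : d ≠ 0) : c ∈ D ↔ d ∈ D := by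
  have h2 := Ring.two_ne_zero hF
  have hl := (isDiffSet_coe_iff.1 h).2
  have hc' := card_diffPairs_two_mul_modEq h2 hneg c
  have hd' := card_diffPairs_two_mul_modEq h2 hneg d
  rw [hl _ (mul_ne_zero h2 hc)] at hc'
  rw [hl _ (mul_ne_zero h2 hd)] at hd'
  have := hc'.symm.trans hd'
  split_ifs at this <;> simp_all [Nat.ModEq]

variable [Fintype F]

theorem IsDiffSet.card_sub_le_one_of_neg_mem (h : IsDiffSet (D : Set F) k l)
    (hF : ringChar F ≠ 2) (hD0 : 0 ∉ D) (hD1 : 1 ∈ D) (hneg : ∀ x ∈ D, -x ∈ D) :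
    k - l ≤ 1 := by
  have hD : D = univ.erase 0 := by
    ext c
    refine ⟨fun hc => mem_erase.2 ⟨ne_of_mem_of_not_mem hc hD0, mem_univ _⟩, fun hc => ?_⟩
    exact (h.mem_iff_mem_of_neg_mem hF hneg one_ne_zero (ne_of_mem_erase hc)).1 hD1
  refine h.card_sub_le_one_of_card_add_one ?_
  rw [← (isDiffSet_coe_iff.1 h).1, hD, card_erase_of_mem (mem_univ _), card_univ,
    Nat.sub_add_cancel Fintype.card_pos]

omit [DecidableEq F] in
theorem exists_addChar_int_ne_one_of_ringChar_eq_two (hF : ringChar F = 2) :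
    ∃ ψ : AddChar F ℤ, ψ ≠ 1 := by
  let _ : Algebra (ZMod (ringChar F)) F := ZMod.algebra _ _
  have : NeZero (ringChar F) := ⟨by omega⟩
  obtain ⟨b, hb⟩ := FiniteField.trace_to_zmod_nondegenerate F one_ne_zero
  refine ⟨(AddChar.zmodChar (ringChar F) (ζ := (-1 : ℤ)) (by rw [hF]; norm_num)).compAddMonoidHom
    (Algebra.trace _ F).toAddMonoidHom, AddChar.ne_one_iff.2 ⟨b, ?_⟩⟩
  rw [one_mul, ← ZMod.val_ne_zero] at hb
  have hval : (Algebra.trace (ZMod (ringChar F)) F b).val = 1 := by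
    have := ZMod.val_lt (Algebra.trace (ZMod (ringChar F)) F b)
    omega
  simp [AddChar.zmodChar_apply, hval]

theorem IsDiffSet.card_sub_le_one_of_ringChar_eq_two (h : IsDiffSet (D : Set F) k l)
    (hF : ringChar F = 2) (hD0 : 0 ∉ D) (hdvd : #D ∣ Fintype.card F - 1) : k - l ≤ 1 := by
  obtain ⟨ψ, hψ⟩ := exists_addChar_int_ne_one_of_ringChar_eq_two hF
  have hprim := AddChar.IsPrimitive.of_ne_one hψ
  obtain ⟨hk, -⟩ := isDiffSet_coe_iff.1 h
  let t : F → ℤ := fun c => ∑ x ∈ D, ψ (c * x)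
  have ht_sq (c : F) (hc : c ≠ 0) : t c ^ 2 = k - l := h.sq_sum_addChar (hprim hc)
  have ht_sum : ∑ c, t c = 0 := by
    rw [sum_comm]
    refine sum_eq_zero fun x hx => ?_
    rw [AddChar.sum_mulShift x hprim, if_neg (ne_of_mem_of_not_mem hx hD0), Nat.cast_zero]
  have ht_zero : t 0 = k := by simp [t, hk]
  have ht_dvd : t 1 ∣ k := by
    rw [← add_sum_erase _ _ (mem_univ 0), ht_zero, add_eq_zero_iff_eq_neg] at ht_sum
    rw [ht_sum, dvd_neg]
    refine dvd_sum fun c hc => ?_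
    have habs := (sq_eq_sq_iff_abs_eq_abs _ _).1
      ((ht_sq 1 one_ne_zero).trans (ht_sq c (ne_of_mem_erase hc)).symm)
    exact (abs_dvd_abs _ _).1 (habs ▸ dvd_rfl)
  obtain ⟨m, hm⟩ := hdvd
  have hk_pos : 0 < k := by
    have := Fintype.one_lt_card (α := F)
    rcases Nat.eq_zero_or_pos k with rfl | hk0
    · rw [hk, zero_mul] at hm
      omega
    · exact hk0
  have hk_eq : k = 1 + l * m := by
    have hcount := h.card_mul_self
    rw [hm, hk] at hcount
    exact Nat.eq_of_mul_eq_mul_right hk_pos (by linarith)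
  have horder := Int.sub_eq_one_of_sq_eq_sub_of_dvd (ht_sq 1 one_ne_zero) ht_dvd (m := m)
    (by exact_mod_cast hk_eq)
  omega

end FiniteField

section PowerResidues

variable {F : Type*} [Field F] {m : ℕ}

theorem zero_notMem_hset : (0 : F) ∉ Hset F m := fun h => h.1 rfl

theorem one_mem_hset : (1 : F) ∈ Hset F m := ⟨one_ne_zero, 1, one_pow m⟩

theorem neg_mem_hset (hm : Odd m) {x : F} (hx : x ∈ Hset F m) : -x ∈ Hset F m := by
  obtain ⟨hx0, y, rfl⟩ := hx
  exact ⟨neg_ne_zero.2 hx0, -y, hm.neg_pow y⟩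

theorem hset_eq_image_range (hm : m ≠ 0) :
    Hset F m = Units.val '' ((powMonoidHom m : Fˣ →* Fˣ).range : Set Fˣ) := by
  ext x
  constructor
  · rintro ⟨hx0, y, rfl⟩
    have hy : y ≠ 0 := by rintro rfl; exact hx0 (zero_pow hm)
    exact ⟨Units.mk0 y hy ^ m, ⟨Units.mk0 y hy, rfl⟩, by simp⟩
  · rintro ⟨_, ⟨u, rfl⟩, rfl⟩
    exact ⟨(u ^ m).ne_zero, u, by simp⟩

theorem ncard_hset_dvd [Fintype F] (hm : m ≠ 0) : (Hset F m).ncard ∣ Fintype.card F - 1 := by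
  classical
  rw [hset_eq_image_range hm, Set.ncard_image_of_injective _ Units.val_injective,
    ← Nat.card_coe_set_eq, SetLike.coe_sort_coe, ← Fintype.card_units,
    ← Nat.card_eq_fintype_card]
  exact Subgroup.card_subgroup_dvd_card _

end PowerResidues

theorem stmt6_general (m : ℕ) (hodd : Odd m) (F : Type*) [Field F] [Fintype F] :
    ¬ IsNontrivialDiffSet (Hset F m) := by
  classical
  rintro ⟨k, l, hH, hkl⟩
  set D := (Hset F m).toFinset
  rw [← Set.coe_toFinset (Hset F m)] at hH
  have hD0 : 0 ∉ D := by simpa [D] using zero_notMem_hset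
  refine hkl.not_ge ?_
  by_cases hF : ringChar F = 2
  · refine hH.card_sub_le_one_of_ringChar_eq_two hF hD0 ?_
    rw [← Set.ncard_eq_toFinset_card']
    exact ncard_hset_dvd hodd.pos.ne'
  · refine hH.card_sub_le_one_of_neg_mem hF hD0 (by simpa [D] using one_mem_hset) fun x hx => ?_
    simpa [D] using neg_mem_hset hodd (by simpa [D] using hx)

theorem stmt6 (m f : ℕ) (hm : 0 < m) (hf : 0 < f) (hodd : Odd m)
    (F : Type*) [Field F] [Fintype F]
    (hq : ∃ p n : ℕ, p.Prime ∧ 0 < n ∧ Fintype.card F = p ^ n)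
    (hcard : Fintype.card F = m * f + 1) :
    ¬ IsNontrivialDiffSet (Hset F m) :=
  stmt6_general m hodd F
end
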